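/- arXiv:1005.4601 — 7 statements merged into one kernel-verified Lean document; each statement's English description precedes it below -/
import Mathlib

section
/- For every integer n ≥ 1 and every real θ > 0, the Ewens sampling formula defines a probability distribution on the partitions of n: summing the weight ESF_{n,θ}(a) = n!·θ^{Σ_i a_i} / (∏_{i=1}^n i^{a_i}·a_i! · S_n(θ)) over all vectors (a_1,…,a_n) of non-negative integers with Σ_{i=1}^n i·a_i = n gives 1. -/
open Finset

/-- The rising factorial `S_n(θ) = θ(θ+1)⋯(θ+n−1)`. -/
noncomputable def risingFac (θ : ℝ) (n : ℕ) : ℝ := ∏ j ∈ Finset.range n, (θ + j)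

/-- The Ewens sampling formula weight of a partition of `n` encoded by a vector
`a : Fin n → ℕ`, where `a i` is the number of parts equal to `i+1`. -/
noncomputable def ESF (n : ℕ) (θ : ℝ) (a : Fin n → ℕ) : ℝ :=
  (Nat.factorial n : ℝ) * θ ^ (∑ i, a i) /
    ((∏ i : Fin n, ((i.1 + 1 : ℝ) ^ (a i) * (Nat.factorial (a i) : ℝ))) * risingFac θ n)

/-- The finite set of all vectors `(a_1, …, a_n)` of non-negative integers with
`Σ_{i=1}^n i·a_i = n` (each entry is at most `n`, so this filtered set captures all of them). -/
def partitionVectors (n : ℕ) : Finset (Fin n → ℕ) :=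
  (Fintype.piFinset fun _ : Fin n => Finset.range (n + 1)).filter
    fun a => ∑ i : Fin n, (i.1 + 1) * a i = n

/-! ### Auxiliary definitions -/

/-- Per-coordinate weight: `θ^x / ((i+1)^x x!)`. -/
noncomputable def pwW (θ : ℝ) (i x : ℕ) : ℝ :=
  θ ^ x / ((i + 1 : ℝ) ^ x * (Nat.factorial x : ℝ))

/-- Total (unnormalized) weight of a vector. -/
noncomputable def Wgt (θ : ℝ) (N : ℕ) (a : Fin N → ℕ) : ℝ := ∏ i : Fin N, pwW θ i.1 (a i)

/-- Vectors on `Fin N` with weighted sum `m`. -/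
def PV (N m : ℕ) : Finset (Fin N → ℕ) :=
  (Fintype.piFinset fun _ : Fin N => Finset.range (N + 1)).filter
    fun a => ∑ i : Fin N, (i.1 + 1) * a i = m

noncomputable def Qsum (θ : ℝ) (N m : ℕ) : ℝ := ∑ a ∈ PV N m, Wgt θ N a

lemma mem_PV {N m : ℕ} (hm : m ≤ N) (a : Fin N → ℕ) :
    a ∈ PV N m ↔ ∑ i : Fin N, (i.1 + 1) * a i = m := by
  constructor
  · exact fun h => (Finset.mem_filter.mp h).2
  · intro h
    refine Finset.mem_filter.mpr ⟨?_, h⟩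
    rw [Fintype.mem_piFinset]
    intro i
    rw [Finset.mem_range]
    have h1 : (i.1 + 1) * a i ≤ m := by
      rw [← h]
      exact Finset.single_le_sum (f := fun i : Fin N => (i.1 + 1) * a i)
        (fun _ _ => Nat.zero_le _) (Finset.mem_univ i)
    have h2 : a i ≤ (i.1 + 1) * a i := Nat.le_mul_of_pos_left _ (Nat.succ_pos _)
    omega

lemma pwW_pos {θ : ℝ} (hθ : 0 < θ) (i x : ℕ) : 0 < pwW θ i x := by
  have := x.factorial_pos
  unfold pwW
  positivity

lemma pwW_step {θ : ℝ} (i x : ℕ) :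
    ((i + 1 : ℝ) * (x + 1)) * pwW θ i (x + 1) = θ * pwW θ i x := by
  have h1 : ((i : ℝ) + 1) ≠ 0 := by positivity
  have h2 : (Nat.factorial x : ℝ) ≠ 0 := Nat.cast_ne_zero.mpr x.factorial_ne_zero
  have h3 : ((x : ℝ) + 1) ≠ 0 := by positivity
  have h4 : ((i : ℝ) + 1) ^ x ≠ 0 := pow_ne_zero _ h1
  unfold pwW
  rw [pow_succ, pow_succ, Nat.factorial_succ]
  push_cast
  field_simp

lemma prod_update_eq {N : ℕ} (h : Fin N → ℕ → ℝ) (a : Fin N → ℕ) (k : Fin N) (v : ℕ) :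
    ∏ i : Fin N, h i (Function.update a k v i)
      = h k v * ∏ i ∈ Finset.univ.erase k, h i (a i) := by
  rw [← Finset.mul_prod_erase Finset.univ (fun i => h i (Function.update a k v i))
    (Finset.mem_univ k), Function.update_self]
  congr 1
  exact Finset.prod_congr rfl fun i hi => by
    rw [Function.update_of_ne (Finset.ne_of_mem_erase hi)]

lemma sum_update_eq {N : ℕ} (a : Fin N → ℕ) (k : Fin N) (v : ℕ) :
    ∑ i : Fin N, (i.1 + 1) * Function.update a k v i
      = (k.1 + 1) * v + ∑ i ∈ Finset.univ.erase k, (i.1 + 1) * a i := by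
  rw [← Finset.add_sum_erase Finset.univ (fun i => (i.1 + 1) * Function.update a k v i)
    (Finset.mem_univ k), Function.update_self]
  congr 1
  exact Finset.sum_congr rfl fun i hi => by
    rw [Function.update_of_ne (Finset.ne_of_mem_erase hi)]

lemma sum_erase_eq {N : ℕ} (a : Fin N → ℕ) (k : Fin N) :
    ∑ i : Fin N, (i.1 + 1) * a i
      = (k.1 + 1) * a k + ∑ i ∈ Finset.univ.erase k, (i.1 + 1) * a i :=
  (Finset.add_sum_erase Finset.univ (fun i => (i.1 + 1) * a i) (Finset.mem_univ k)).symm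

lemma key_lemma {θ : ℝ} {N m : ℕ} (hm : m ≤ N) (k : Fin N) (hk : k.1 + 1 ≤ m) :
    ∑ a ∈ PV N m, (((k.1 : ℝ) + 1) * (a k : ℝ)) * Wgt θ N a
      = θ * Qsum θ N (m - (k.1 + 1)) := by
  rw [Qsum, Finset.mul_sum]
  rw [← Finset.sum_filter_of_ne (p := fun a : Fin N → ℕ => a k ≠ 0)
    (fun a _ hne h0 => by simp [h0] at hne)]
  refine Finset.sum_bij' (fun a _ => Function.update a k (a k - 1))
    (fun b _ => Function.update b k (b k + 1)) ?_ ?_ ?_ ?_ ?_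
  · -- maps into PV N (m - (k+1))
    intro a ha
    obtain ⟨haPV, hak⟩ := Finset.mem_filter.mp ha
    have hsum := (mem_PV hm a).mp haPV
    rw [mem_PV (le_trans (Nat.sub_le _ _) hm), sum_update_eq]
    obtain ⟨c, hc⟩ : ∃ c, a k = c + 1 :=
      ⟨a k - 1, (Nat.succ_pred_eq_of_pos (Nat.pos_of_ne_zero hak)).symm⟩
    rw [sum_erase_eq a k] at hsum
    rw [hc] at hsum ⊢
    have hmul : (k.1 + 1) * (c + 1) = (k.1 + 1) * c + (k.1 + 1) := Nat.mul_succ _ _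
    simp only [Nat.add_sub_cancel]
    omega
  · -- maps back into the filter set
    intro b hb
    have hsum := (mem_PV (le_trans (Nat.sub_le _ _) hm) b).mp hb
    refine Finset.mem_filter.mpr ⟨(mem_PV hm _).mpr ?_, by simp⟩
    rw [sum_update_eq]
    rw [sum_erase_eq b k] at hsum
    have hmul : (k.1 + 1) * (b k + 1) = (k.1 + 1) * b k + (k.1 + 1) := Nat.mul_succ _ _
    omega
  · -- left inverse
    intro a ha
    have hak : a k ≠ 0 := (Finset.mem_filter.mp ha).2
    simp only [Function.update_self, Function.update_idem]
    rw [Nat.sub_add_cancel (Nat.pos_of_ne_zero hak), Function.update_eq_self]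
  · -- right inverse
    intro b _
    simp only [Function.update_self, Function.update_idem, Nat.add_sub_cancel,
      Function.update_eq_self]
  · -- terms agree
    intro a ha
    have hak : a k ≠ 0 := (Finset.mem_filter.mp ha).2
    obtain ⟨c, hc⟩ : ∃ c, a k = c + 1 :=
      ⟨a k - 1, (Nat.succ_pred_eq_of_pos (Nat.pos_of_ne_zero hak)).symm⟩
    have hW1 : Wgt θ N a = pwW θ k.1 (c + 1) * ∏ i ∈ Finset.univ.erase k, pwW θ i.1 (a i) := by
      rw [Wgt, ← Finset.mul_prod_erase Finset.univ (fun i => pwW θ i.1 (a i))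
        (Finset.mem_univ k), hc]
    have hW2 : Wgt θ N (Function.update a k (a k - 1))
        = pwW θ k.1 c * ∏ i ∈ Finset.univ.erase k, pwW θ i.1 (a i) := by
      rw [Wgt]
      have := prod_update_eq (fun i x => pwW θ i.1 x) a k (a k - 1)
      rw [this, hc]
      simp
    rw [hW1, hW2, hc]
    have hstep := pwW_step (θ := θ) k.1 c
    push_cast
    calc ((k.1 : ℝ) + 1) * ((c : ℝ) + 1) * (pwW θ k.1 (c + 1)
            * ∏ i ∈ Finset.univ.erase k, pwW θ i.1 (a i))
        = (((k.1 : ℝ) + 1) * ((c : ℝ) + 1) * pwW θ k.1 (c + 1))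
            * ∏ i ∈ Finset.univ.erase k, pwW θ i.1 (a i) := by ring
      _ = (θ * pwW θ k.1 c) * ∏ i ∈ Finset.univ.erase k, pwW θ i.1 (a i) := by
            rw [← hstep]
      _ = θ * (pwW θ k.1 c * ∏ i ∈ Finset.univ.erase k, pwW θ i.1 (a i)) := by ring

lemma recQ {θ : ℝ} {N m : ℕ} (hmN : m ≤ N) :
    (m : ℝ) * Qsum θ N m = θ * ∑ j ∈ Finset.range m, Qsum θ N j := by
  have step1 : (m : ℝ) * Qsum θ N m
      = ∑ a ∈ PV N m, ∑ k : Fin N, (((k.1 : ℝ) + 1) * (a k : ℝ)) * Wgt θ N a := by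
    rw [Qsum, Finset.mul_sum]
    refine Finset.sum_congr rfl fun a ha => ?_
    have hsum := (Finset.mem_filter.mp ha).2
    calc (m : ℝ) * Wgt θ N a
        = ((∑ i : Fin N, (i.1 + 1) * a i : ℕ) : ℝ) * Wgt θ N a := by rw [hsum]
      _ = ∑ k : Fin N, (((k.1 : ℝ) + 1) * (a k : ℝ)) * Wgt θ N a := by
          push_cast; rw [Finset.sum_mul]
  rw [step1, Finset.sum_comm]
  have step2 : ∀ k : Fin N, ∑ a ∈ PV N m, (((k.1 : ℝ) + 1) * (a k : ℝ)) * Wgt θ N a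
      = if k.1 + 1 ≤ m then θ * Qsum θ N (m - (k.1 + 1)) else 0 := by
    intro k
    by_cases hk : k.1 + 1 ≤ m
    · rw [if_pos hk]; exact key_lemma hmN k hk
    · rw [if_neg hk]
      refine Finset.sum_eq_zero fun a ha => ?_
      have hsum := (Finset.mem_filter.mp ha).2
      have h1 : (k.1 + 1) * a k ≤ m := by
        rw [← hsum]
        exact Finset.single_le_sum (f := fun i : Fin N => (i.1 + 1) * a i)
          (fun _ _ => Nat.zero_le _) (Finset.mem_univ k)
      have h2 : a k = 0 := by
        by_contra h
        have := Nat.le_mul_of_pos_right (k.1 + 1) (Nat.pos_of_ne_zero h)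
        omega
      simp [h2]
  rw [Finset.sum_congr rfl fun k _ => step2 k]
  rw [Fin.sum_univ_eq_sum_range
    (fun j => if j + 1 ≤ m then θ * Qsum θ N (m - (j + 1)) else 0) N]
  have hsub : Finset.range m ⊆ Finset.range N := Finset.range_subset_range.mpr hmN
  rw [← Finset.sum_subset hsub (fun x _ hx => by
    rw [if_neg]; rw [Finset.mem_range] at hx; omega)]
  have step3 : ∑ j ∈ Finset.range m, (if j + 1 ≤ m then θ * Qsum θ N (m - (j + 1)) else 0)
      = ∑ j ∈ Finset.range m, θ * Qsum θ N (m - 1 - j) := by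
    refine Finset.sum_congr rfl fun j hj => ?_
    rw [Finset.mem_range] at hj
    rw [if_pos (by omega)]
    have he : m - (j + 1) = m - 1 - j := by omega
    rw [he]
  rw [step3, Finset.sum_range_reflect (fun j => θ * Qsum θ N j) m, ← Finset.mul_sum]

lemma risingFac_succ (θ : ℝ) (m : ℕ) :
    risingFac θ (m + 1) = risingFac θ m * (θ + m) := by
  rw [risingFac, risingFac, Finset.prod_range_succ]

lemma rF_sum (θ : ℝ) : ∀ m : ℕ,
    θ * ∑ j ∈ Finset.range (m + 1), risingFac θ j / (Nat.factorial j : ℝ)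
      = risingFac θ (m + 1) / (Nat.factorial m : ℝ) := by
  intro m
  induction m with
  | zero => simp [risingFac]
  | succ m ih =>
    rw [Finset.sum_range_succ, mul_add, ih, risingFac_succ θ (m + 1)]
    have h1 : (Nat.factorial m : ℝ) ≠ 0 := Nat.cast_ne_zero.mpr m.factorial_ne_zero
    have h2 : (Nat.factorial (m + 1) : ℝ) ≠ 0 := Nat.cast_ne_zero.mpr (m + 1).factorial_ne_zero
    rw [Nat.factorial_succ]
    push_cast
    field_simp
    ring

lemma Q_eq {θ : ℝ} (hθ : 0 < θ) {N : ℕ} :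
    ∀ m, m ≤ N → (Nat.factorial m : ℝ) * Qsum θ N m = risingFac θ m := by
  intro m
  induction m using Nat.strong_induction_on with
  | _ m ih =>
    intro hmN
    obtain _ | m' := m
    · have hPV : PV N 0 = {fun _ => 0} := by
        ext a
        rw [mem_PV (Nat.zero_le N), Finset.mem_singleton]
        constructor
        · intro h
          funext i
          have h0 := (Finset.sum_eq_zero_iff.mp h) i (Finset.mem_univ i)
          exact (Nat.mul_eq_zero.mp h0).resolve_left (Nat.succ_ne_zero _)
        · rintro rfl; simp
      rw [Qsum, hPV, Finset.sum_singleton]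
      simp [risingFac, Wgt, pwW]
    · have hrec := recQ (θ := θ) (N := N) (m := m' + 1) hmN
      have hQj : ∀ j ∈ Finset.range (m' + 1),
          Qsum θ N j = risingFac θ j / (Nat.factorial j : ℝ) := by
        intro j hj
        rw [Finset.mem_range] at hj
        have hfj : (Nat.factorial j : ℝ) ≠ 0 := Nat.cast_ne_zero.mpr j.factorial_ne_zero
        have := ih j (by omega) (by omega)
        field_simp
        linarith [this]
      rw [Finset.sum_congr rfl hQj, rF_sum θ m'] at hrec
      have hfm : (Nat.factorial m' : ℝ) ≠ 0 := Nat.cast_ne_zero.mpr m'.factorial_ne_zero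
      rw [Nat.factorial_succ]
      push_cast
      push_cast at hrec
      have : ((m' : ℝ) + 1) * (Nat.factorial m' : ℝ) * Qsum θ N (m' + 1)
          = (Nat.factorial m' : ℝ) * (((m' : ℝ) + 1) * Qsum θ N (m' + 1)) := by ring
      rw [this, hrec]
      field_simp

theorem ewens_sampling_formula_sums_to_one (n : ℕ) (hn : 1 ≤ n) (θ : ℝ) (hθ : 0 < θ) :
    ∑ a ∈ partitionVectors n, ESF n θ a = 1 := by
  have hrf : 0 < risingFac θ n :=
    Finset.prod_pos fun j _ => by positivity
  have hfn : (0 : ℝ) < (Nat.factorial n : ℝ) := Nat.cast_pos.mpr n.factorial_pos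
  have hQ : (Nat.factorial n : ℝ) * Qsum θ n n = risingFac θ n := Q_eq hθ n le_rfl
  have hset : partitionVectors n = PV n n := rfl
  have hW : ∀ a : Fin n → ℕ,
      ESF n θ a = ((Nat.factorial n : ℝ) / risingFac θ n) * Wgt θ n a := by
    intro a
    have hprod : Wgt θ n a = θ ^ (∑ i, a i)
        / ∏ i : Fin n, ((i.1 + 1 : ℝ) ^ (a i) * (Nat.factorial (a i) : ℝ)) := by
      rw [Wgt]
      simp only [pwW]
      rw [Finset.prod_div_distrib, Finset.prod_pow_eq_pow_sum]
    have hD : (0 : ℝ) < ∏ i : Fin n, ((i.1 + 1 : ℝ) ^ (a i) * (Nat.factorial (a i) : ℝ)) :=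
      Finset.prod_pos fun i _ => mul_pos (pow_pos (by positivity) _)
        (Nat.cast_pos.mpr (a i).factorial_pos)
    rw [ESF, hprod]
    field_simp
  rw [hset, Finset.sum_congr rfl fun a _ => hW a, ← Finset.mul_sum, ← Qsum]
  have hQ' : Qsum θ n n = risingFac θ n / (Nat.factorial n : ℝ) := by
    field_simp
    linarith [hQ]
  rw [hQ']
  field_simp
end

section
/- The Ewens sampling formula satisfies Kingman's non-interference property with explicit constant: for every integer n ≥ 1, every real θ > 0, every integer 1 ≤ r ≤ n, and every vector (b_1,…,b_{n−r}) of non-negative integers with Σ_{i} i·b_i = n−r, one has (r·(b_r+1)/n)·ESF_{n,θ}(b + e_r) = (θ·(n−1)!·S_{n−r}(θ) / ((n−r)!·S_n(θ)))·ESF_{n−r,θ}(b), where b + e_r denotes the vector b with its r-th entry increased by 1 (a partition of n), and where for r = n the empty partition has ESF weight 1 and S_0(θ) = 1. In particular the constant on the right does not depend on b. -/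
open Finset

/-- Extend a partition vector of `n - r` to a vector of length `n`, padding with `0`. -/
def extVec' {n r : ℕ} (hrn : r ≤ n) (b : Fin (n - r) → ℕ) : Fin n → ℕ :=
  fun i => if h : i.1 < n - r then b ⟨i.1, h⟩ else 0

theorem ewens_non_interference (n : ℕ) (hn : 1 ≤ n) (θ : ℝ) (hθ : 0 < θ)
    (r : ℕ) (hr : 1 ≤ r) (hrn : r ≤ n)
    (b : Fin (n - r) → ℕ) (hb : ∑ i : Fin (n - r), (i.1 + 1) * b i = n - r) :
    ((r : ℝ) * (extVec' hrn b ⟨r - 1, by omega⟩ + 1) / n) *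
        ESF n θ (Function.update (extVec' hrn b) ⟨r - 1, by omega⟩
          (extVec' hrn b ⟨r - 1, by omega⟩ + 1)) =
      (θ * (Nat.factorial (n - 1) : ℝ) * risingFac θ (n - r) /
          ((Nat.factorial (n - r) : ℝ) * risingFac θ n)) *
        ESF (n - r) θ b := by
  have hjn : r - 1 < n := by omega
  set j : Fin n := ⟨r - 1, hjn⟩ with hjdef
  set a : Fin n → ℕ := extVec' hrn b with hadef
  set m : ℕ := a j with hmdef
  have hj1 : (j : ℕ) + 1 = r := by simp [hjdef]; omega
  have hjr : ((j : ℕ) : ℝ) + 1 = (r : ℝ) := by exact_mod_cast hj1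
  -- the natural-number function underlying extVec'
  set g : ℕ → ℕ := fun k => if h : k < n - r then b ⟨k, h⟩ else 0 with hgdef
  have hag : ∀ i : Fin n, a i = g i.1 := fun i => rfl
  have hbg : ∀ i : Fin (n - r), b i = g i.1 := by
    intro i; simp [hgdef, i.isLt]
  -- sums agree
  have hsum : ∑ i : Fin n, a i = ∑ i : Fin (n - r), b i := by
    have e1 : ∑ i : Fin n, a i = ∑ i ∈ Finset.range n, g i :=
      Fin.sum_univ_eq_sum_range g n
    have e3 : ∑ i : Fin (n - r), b i = ∑ i ∈ Finset.range (n - r), g i := by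
      rw [Finset.sum_congr rfl fun (i : Fin (n-r)) _ => hbg i]
      exact Fin.sum_univ_eq_sum_range g (n - r)
    rw [e1, e3]
    refine (Finset.sum_subset (Finset.range_subset_range.2 (by omega)) ?_).symm
    intro x _ hx'
    simp only [Finset.mem_range, not_lt] at hx'
    simp [hgdef, not_lt.2 hx']
  -- products agree
  set G : ℕ → ℝ := fun k => (k + 1 : ℝ) ^ (g k) * (Nat.factorial (g k) : ℝ) with hGdef
  have hprod : (∏ i : Fin n, ((i.1 + 1 : ℝ) ^ (a i) * (Nat.factorial (a i) : ℝ)))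
      = ∏ i : Fin (n - r), ((i.1 + 1 : ℝ) ^ (b i) * (Nat.factorial (b i) : ℝ)) := by
    have e1 : (∏ i : Fin n, ((i.1 + 1 : ℝ) ^ (a i) * (Nat.factorial (a i) : ℝ)))
        = ∏ i ∈ Finset.range n, G i := Fin.prod_univ_eq_prod_range G n
    have e3 : (∏ i : Fin (n - r), ((i.1 + 1 : ℝ) ^ (b i) * (Nat.factorial (b i) : ℝ)))
        = ∏ i ∈ Finset.range (n - r), G i := by
      rw [Finset.prod_congr rfl fun (i : Fin (n-r)) _ =>
        show ((i.1 + 1 : ℝ) ^ (b i) * (Nat.factorial (b i) : ℝ)) = G i.1 by rw [hGdef]; simp [hbg i]]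
      exact Fin.prod_univ_eq_prod_range G (n - r)
    rw [e1, e3]
    refine (Finset.prod_subset (Finset.range_subset_range.2 (by omega)) ?_).symm
    intro x _ hx'
    simp only [Finset.mem_range, not_lt] at hx'
    simp [hGdef, hgdef, not_lt.2 hx']
  -- split off the j-th factor
  set Q : ℝ := ∏ i ∈ Finset.univ.erase j, ((i.1 + 1 : ℝ) ^ (a i) * (Nat.factorial (a i) : ℝ))
    with hQdef
  have hQpos : 0 < Q := by
    refine Finset.prod_pos fun i _ => ?_
    positivity
  have hPa : (∏ i : Fin n, ((i.1 + 1 : ℝ) ^ (a i) * (Nat.factorial (a i) : ℝ)))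
      = ((r : ℝ) ^ m * (Nat.factorial m : ℝ)) * Q := by
    rw [← Finset.mul_prod_erase _ _ (Finset.mem_univ j)]
    congr 1
    rw [hjr, ← hmdef]
  set c : Fin n → ℕ := Function.update a j (m + 1) with hcdef
  have hPc : (∏ i : Fin n, ((i.1 + 1 : ℝ) ^ (c i) * (Nat.factorial (c i) : ℝ)))
      = ((r : ℝ) ^ (m + 1) * (Nat.factorial (m + 1) : ℝ)) * Q := by
    rw [← Finset.mul_prod_erase _ _ (Finset.mem_univ j)]
    congr 1
    · rw [hcdef]; rw [Function.update_self, hjr]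
    · refine Finset.prod_congr rfl fun i hi => ?_
      rw [hcdef, Function.update_of_ne (Finset.ne_of_mem_erase hi)]
  have hsumc : ∑ i : Fin n, c i = (∑ i : Fin (n - r), b i) + 1 := by
    rw [← hsum, hcdef, Finset.sum_update_of_mem (Finset.mem_univ j),
      ← Finset.add_sum_erase _ a (Finset.mem_univ j), Finset.erase_eq, ← hmdef]
    omega
  -- positivity facts
  have hRn : 0 < risingFac θ n := Finset.prod_pos fun i _ => by positivity
  have hRnr : 0 < risingFac θ (n - r) := Finset.prod_pos fun i _ => by positivity
  have hnR : (0 : ℝ) < n := by exact_mod_cast hn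
  have hrR : (0 : ℝ) < r := by exact_mod_cast hr
  have hfacn : (Nat.factorial n : ℝ) = n * Nat.factorial (n - 1) := by
    exact_mod_cast (Nat.mul_factorial_pred (by omega)).symm
  have hPab : (∏ i : Fin (n - r), ((i.1 + 1 : ℝ) ^ (b i) * (Nat.factorial (b i) : ℝ)))
      = ((r : ℝ) ^ m * (Nat.factorial m : ℝ)) * Q := hprod.symm.trans hPa
  -- now compute
  rw [ESF, ESF, hsumc, hPc, hPab]
  rw [hfacn, pow_succ, pow_succ, Nat.factorial_succ]
  have hfm : (0:ℝ) < (Nat.factorial m : ℝ) := by exact_mod_cast Nat.factorial_pos m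
  have hfnr : (0:ℝ) < (Nat.factorial (n - r) : ℝ) := by exact_mod_cast Nat.factorial_pos (n - r)
  have hrm : (0:ℝ) < (r:ℝ) ^ m := by positivity
  push_cast
  field_simp
end

section
/- Cauchy's formula for cycle types (the θ = 1 case of the Ewens sampling formula): for every integer n ≥ 1 and every vector (a_1,…,a_n) of non-negative integers with Σ_{i=1}^n i·a_i = n, the number of permutations of an n-element set whose cycle decomposition (including fixed points as 1-cycles) contains exactly a_i cycles of length i for each i equals n! / (∏_{i=1}^n i^{a_i}·a_i!). Equivalently, for a uniformly random permutation of n elements, the probability of this cycle type is 1/(∏_{i=1}^n i^{a_i}·a_i!), which is ESF_{n,1}(a). -/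
open Finset

/-- The number of cycles of length `i` in the cycle decomposition of `σ`,
counting fixed points as cycles of length 1. -/
def cyclesOfLength {n : ℕ} (σ : Equiv.Perm (Fin n)) (i : ℕ) : ℕ :=
  if i = 1 then n - σ.support.card else σ.cycleType.count i

/-! Permutations of a fixed cycle type form one conjugacy class, of size `n!` divided by the
order of the centralizer, which is `∏ i ^ aᵢ · aᵢ!`: each `i`-cycle can be rotated and cycles of
equal length can be permuted. Mathlib proves this count as `Equiv.Perm.card_of_cycleType_mul_eq`;
what remains is the translation to `Equiv.Perm.cycleType`, which omits fixed points, so that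
`a₁ = n - Σ_{i ≥ 2} i·aᵢ` is determined by the other entries. -/

open Equiv Equiv.Perm
open scoped Nat

/-- The `Equiv.Perm.cycleType` of a permutation with `b j` cycles of length `j + 2`. -/
def cycleTypeOfCounts {k : ℕ} (b : Fin k → ℕ) : Multiset ℕ :=
  ∑ j, Multiset.replicate (b j) (j + 2)

section cycleTypeOfCounts

variable {k : ℕ} (b : Fin k → ℕ)

theorem count_cycleTypeOfCounts_add_two (j : Fin k) :
    (cycleTypeOfCounts b).count ((j : ℕ) + 2) = b j := by
  simp [cycleTypeOfCounts, Multiset.count_sum', Multiset.count_replicate, Fin.val_inj]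

theorem count_cycleTypeOfCounts_of_forall_ne {l : ℕ} (hl : ∀ j : Fin k, (j : ℕ) + 2 ≠ l) :
    (cycleTypeOfCounts b).count l = 0 := by
  simp [cycleTypeOfCounts, Multiset.count_sum', Multiset.count_replicate, hl]

theorem two_le_of_mem_cycleTypeOfCounts {l : ℕ} (hl : l ∈ cycleTypeOfCounts b) : 2 ≤ l := by
  obtain ⟨j, -, hj⟩ := Multiset.mem_sum.1 hl
  rw [Multiset.eq_of_mem_replicate hj]
  omega

theorem sum_cycleTypeOfCounts : (cycleTypeOfCounts b).sum = ∑ j, (j + 2) * b j := by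
  simp [cycleTypeOfCounts, Multiset.sum_sum, mul_comm]

theorem prod_cycleTypeOfCounts :
    (cycleTypeOfCounts b).prod = ∏ j : Fin k, ((j : ℕ) + 2) ^ b j := by
  simp [cycleTypeOfCounts, Multiset.prod_sum]

theorem prod_factorial_count_cycleTypeOfCounts :
    ∏ l ∈ (cycleTypeOfCounts b).toFinset, ((cycleTypeOfCounts b).count l)! = ∏ j, (b j)! := by
  let length : Fin k ↪ ℕ := ⟨fun j => j + 2, fun i j h => Fin.ext (by simpa using h)⟩
  have hsub : (cycleTypeOfCounts b).toFinset ⊆ Finset.univ.map length := by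
    intro l hl
    obtain ⟨j, -, hj⟩ := Multiset.mem_sum.1 (Multiset.mem_toFinset.1 hl)
    exact Finset.mem_map.2 ⟨j, Finset.mem_univ _, (Multiset.eq_of_mem_replicate hj).symm⟩
  rw [Finset.prod_subset hsub fun l _ hl => by simp [Multiset.count_eq_zero.2 (by simpa using hl)],
    Finset.prod_map]
  exact Finset.prod_congr rfl fun j _ =>
    congrArg Nat.factorial (count_cycleTypeOfCounts_add_two b j)

variable {α : Type*} [Fintype α] [DecidableEq α]

theorem cycleType_eq_cycleTypeOfCounts_iff (hα : Fintype.card α ≤ k + 1) (σ : Perm α) :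
    σ.cycleType = cycleTypeOfCounts b ↔ ∀ j : Fin k, σ.cycleType.count ((j : ℕ) + 2) = b j := by
  refine ⟨fun h j => h ▸ count_cycleTypeOfCounts_add_two b j, fun h => Multiset.ext.2 fun l => ?_⟩
  by_cases hl : ∃ j : Fin k, (j : ℕ) + 2 = l
  · obtain ⟨j, rfl⟩ := hl
    rw [h, count_cycleTypeOfCounts_add_two]
  · push Not at hl
    rw [count_cycleTypeOfCounts_of_forall_ne b hl, Multiset.count_eq_zero]
    intro hmem
    have h2 := two_le_of_mem_cycleType hmem
    have hle := (le_card_support_of_mem_cycleType hmem).trans (σ.support.card_le_univ)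
    exact hl ⟨l - 2, by omega⟩ (Nat.sub_add_cancel h2)

theorem card_cycleType_eq_cycleTypeOfCounts_mul (hb : ∑ j, (j + 2) * b j ≤ Fintype.card α) :
    #{σ : Perm α | σ.cycleType = cycleTypeOfCounts b} *
        ((Fintype.card α - ∑ j, (j + 2) * b j)! * ∏ j : Fin k, ((j : ℕ) + 2) ^ b j * (b j)!) =
      (Fintype.card α)! := by
  have h := card_of_cycleType_mul_eq α (cycleTypeOfCounts b)
  rw [if_pos ⟨(sum_cycleTypeOfCounts b).trans_le hb,
    fun _ => two_le_of_mem_cycleTypeOfCounts b⟩] at h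
  rwa [sum_cycleTypeOfCounts, prod_cycleTypeOfCounts, prod_factorial_count_cycleTypeOfCounts,
    mul_assoc, ← Finset.prod_mul_distrib] at h

end cycleTypeOfCounts

theorem sum_succ_mul_eq_add_sum_tail {k : ℕ} (a : Fin (k + 1) → ℕ) :
    ∑ i : Fin (k + 1), (i.1 + 1) * a i = a 0 + ∑ j : Fin k, ((j : ℕ) + 2) * Fin.tail a j := by
  simp [Fin.sum_univ_succ, Fin.tail, add_assoc]

theorem forall_cyclesOfLength_eq_iff {k : ℕ} (a : Fin (k + 1) → ℕ)
    (ha : ∑ i : Fin (k + 1), (i.1 + 1) * a i = k + 1) (σ : Perm (Fin (k + 1))) :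
    (∀ i : Fin (k + 1), cyclesOfLength σ (i.1 + 1) = a i) ↔
      σ.cycleType = cycleTypeOfCounts (Fin.tail a) := by
  have hk : Fintype.card (Fin (k + 1)) ≤ k + 1 := (Fintype.card_fin _).le
  have hsucc (j : Fin k) : cyclesOfLength σ (j.succ.1 + 1) = σ.cycleType.count ((j : ℕ) + 2) := by
    simp [cyclesOfLength]
  rw [Fin.forall_fin_succ, cycleType_eq_cycleTypeOfCounts_iff _ hk]
  simp only [hsucc, Fin.tail]
  refine ⟨And.right, fun h => ⟨?_, h⟩⟩
  have hσ := (cycleType_eq_cycleTypeOfCounts_iff (Fin.tail a) hk σ).2 h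
  rw [sum_succ_mul_eq_add_sum_tail] at ha
  rw [cyclesOfLength, if_pos (by simp), ← sum_cycleType, hσ, sum_cycleTypeOfCounts]
  omega

theorem card_forall_cyclesOfLength_eq_mul {k : ℕ} (a : Fin (k + 1) → ℕ)
    (ha : ∑ i : Fin (k + 1), (i.1 + 1) * a i = k + 1) :
    #{σ : Perm (Fin (k + 1)) | ∀ i : Fin (k + 1), cyclesOfLength σ (i.1 + 1) = a i} *
        ∏ i : Fin (k + 1), (i.1 + 1) ^ a i * (a i)! = (k + 1)! := by
  rw [Finset.filter_congr fun σ _ => forall_cyclesOfLength_eq_iff a ha σ, Fin.prod_univ_succ]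
  rw [sum_succ_mul_eq_add_sum_tail] at ha
  have h := card_cycleType_eq_cycleTypeOfCounts_mul (α := Fin (k + 1)) (Fin.tail a)
    (by rw [Fintype.card_fin]; omega)
  rw [Fintype.card_fin,
    show k + 1 - ∑ j : Fin k, ((j : ℕ) + 2) * Fin.tail a j = a 0 by omega] at h
  simpa [Fin.tail, add_assoc] using h

theorem risingFac_one (n : ℕ) : risingFac 1 n = n ! := by
  rw [risingFac, ← Finset.prod_range_add_one_eq_factorial]
  push_cast
  exact Finset.prod_congr rfl fun j _ => add_comm _ _

theorem ESF_one (n : ℕ) (a : Fin n → ℕ) :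
    ESF n 1 a = (∏ i : Fin n, ((i.1 + 1 : ℝ) ^ a i * (a i)!))⁻¹ := by
  have : (n ! : ℝ) ≠ 0 := by positivity
  rw [ESF, risingFac_one, one_pow, mul_one, div_mul_cancel_right₀ this]

theorem cauchy_formula_cycle_types (n : ℕ) (hn : 1 ≤ n)
    (a : Fin n → ℕ) (ha : ∑ i : Fin n, (i.1 + 1) * a i = n) :
    ((Finset.univ.filter fun σ : Equiv.Perm (Fin n) =>
        ∀ i : Fin n, cyclesOfLength σ (i.1 + 1) = a i).card : ℝ) =
      (Nat.factorial n : ℝ) /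
        (∏ i : Fin n, ((i.1 + 1 : ℝ) ^ (a i) * (Nat.factorial (a i) : ℝ))) ∧
    ((Finset.univ.filter fun σ : Equiv.Perm (Fin n) =>
        ∀ i : Fin n, cyclesOfLength σ (i.1 + 1) = a i).card : ℝ) / (Nat.factorial n : ℝ) =
      ESF n 1 a := by
  obtain ⟨k, rfl⟩ := Nat.exists_eq_add_of_le' hn
  have hcard : (#{σ : Perm (Fin (k + 1)) | ∀ i, cyclesOfLength σ (i.1 + 1) = a i} : ℝ) =
      (k + 1)! / ∏ i : Fin (k + 1), ((i.1 + 1 : ℝ) ^ a i * (a i)!) := by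
    rw [eq_div_iff (by positivity)]
    exact_mod_cast card_forall_cyclesOfLength_eq_mul a ha
  refine ⟨hcard, ?_⟩
  rw [hcard, ESF_one, div_div_cancel_left' (by positivity)]
end

section
/- For every integer n ≥ 1, the number of permutations of an n-element set possessing a cycle of length strictly greater than n/2 (fixed points counting as cycles of length 1), divided by n!, equals Σ_{j=1}^n (−1)^{j+1}/j = 1 − 1/2 + 1/3 − ⋯ ± 1/n (equivalently, it equals Σ_{n/2 < j ≤ n} 1/j). -/
open Finset
open scoped Classical

/-- The multiset of all cycle lengths of a permutation of `Fin n`, counting each fixed point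
as a cycle of length 1. -/
def fullCycleType {n : ℕ} (σ : Equiv.Perm (Fin n)) : Multiset ℕ :=
  σ.cycleType + Multiset.replicate (n - σ.support.card) 1

/-!
Double count the pairs `(σ, x)` with `x` on a `j`-cycle of `σ`. For each point `x` and each
`1 ≤ j ≤ n`, exactly `(n - 1)!` permutations put `x` on a `j`-cycle: writing a permutation of
`Fin (n + 1)` as `decomposeFin.symm (p, e)`, the point `0` is fixed when `p = 0`, and when
`p = q.succ` its cycle is the cycle of `e` through `q` lengthened by one. Hence there are `n!`
pairs. If `2 j > n` a permutation has at most one `j`-cycle, so `n! / j` permutations have one,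
and these sets are disjoint for the different `j > n / 2`. Finally
`∑_{n/2 < j ≤ n} 1/j = ∑_{j ≤ n} (-1)^(j+1)/j`.
-/
open Function Nat

namespace Nat.Partition

variable {n : ℕ} (p : n.Partition)

theorem add_le_of_mem_erase {j k : ℕ} (hj : j ∈ p.parts) (hk : k ∈ p.parts.erase j) :
    j + k ≤ n := by
  rw [← p.parts_sum, ← Multiset.sum_erase hj]
  exact Nat.add_le_add_left (Multiset.le_sum_of_mem hk) j

theorem count_le_one_of_lt_two_mul {j : ℕ} (hj : n < 2 * j) : p.parts.count j ≤ 1 := by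
  by_contra! h
  have hmem : j ∈ p.parts.erase j := by
    rw [← Multiset.count_pos, Multiset.count_erase_self]; omega
  have := p.add_le_of_mem_erase (Multiset.count_pos.1 (by omega)) hmem
  omega

theorem eq_of_mem_of_lt_two_mul {j k : ℕ} (hj : j ∈ p.parts) (hk : k ∈ p.parts)
    (hj2 : n < 2 * j) (hk2 : n < 2 * k) : j = k := by
  by_contra hne
  have := p.add_le_of_mem_erase hj ((Multiset.mem_erase_of_ne (Ne.symm hne)).2 hk)
  omega

end Nat.Partition

theorem sum_alternating_inv_eq_sum_Ioc_inv {K : Type*} [Field K] [CharZero K] (n : ℕ) :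
    ∑ j ∈ Icc 1 n, (-1 : K) ^ (j + 1) / j = ∑ j ∈ Ioc (n / 2) n, (j : K)⁻¹ := by
  have heven (m : ℕ) :
      ∑ j ∈ Icc 1 (2 * m), (-1 : K) ^ (j + 1) / j = ∑ j ∈ Ioc m (2 * m), (j : K)⁻¹ := by
    induction m with
    | zero => simp
    | succ m ih =>
      rw [show 2 * (m + 1) = 2 * m + 1 + 1 by ring]
      have hbot : ∑ j ∈ Ioc m (2 * m + 1 + 1), (j : K)⁻¹
          = ((m + 1 : ℕ) : K)⁻¹ + ∑ j ∈ Ioc (m + 1) (2 * m + 1 + 1), (j : K)⁻¹ := by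
        rw [← sum_Ioc_consecutive _ (Nat.le_succ m) (by omega), Nat.Ioc_succ_singleton,
          sum_singleton]
      have htop : ∑ j ∈ Ioc m (2 * m + 1 + 1), (j : K)⁻¹
          = ∑ j ∈ Ioc m (2 * m), (j : K)⁻¹ + ((2 * m + 1 : ℕ) : K)⁻¹
            + ((2 * m + 1 + 1 : ℕ) : K)⁻¹ := by
        rw [sum_Ioc_succ_top (by omega), sum_Ioc_succ_top (by omega)]
      have hodd : Odd (2 * m + 1 + 1 + 1) := ⟨m + 1, by ring⟩
      rw [sum_Icc_succ_top (by omega), sum_Icc_succ_top (by omega), ih,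
        Even.neg_one_pow ⟨m + 1, by ring⟩, Odd.neg_one_pow hodd]
      have hhalf : ((m + 1 : ℕ) : K)⁻¹ = 2 * ((2 * m + 1 + 1 : ℕ) : K)⁻¹ := by
        rw [show ((2 * m + 1 + 1 : ℕ) : K) = 2 * ((m + 1 : ℕ) : K) by push_cast; ring, mul_inv,
          ← mul_assoc, mul_inv_cancel₀ two_ne_zero, one_mul]
      linear_combination hhalf - htop + hbot
  obtain ⟨m, rfl | rfl⟩ := Nat.even_or_odd' n
  · rw [Nat.mul_div_cancel_left m two_pos, heven]
  · rw [show (2 * m + 1) / 2 = m by omega, sum_Icc_succ_top (by omega), heven,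
      sum_Ioc_succ_top (by omega), Even.neg_one_pow ⟨m + 1, by ring⟩, one_div]

namespace Equiv.Perm

variable {α β : Type*}

theorem minimalPeriod_pos [Finite α] (σ : Perm α) (x : α) : 0 < minimalPeriod σ x :=
  minimalPeriod_pos_of_mem_periodicPts <|
    (injective_iff_periodicPts_eq_univ.1 σ.injective).symm ▸ Set.mem_univ x

theorem minimalPeriod_permCongr (f : α ≃ β) (σ : Perm α) (x : α) :
    minimalPeriod (f.permCongr σ) (f x) = minimalPeriod σ x :=
  minimalPeriod_eq_minimalPeriod_iff.2 fun _ =>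
    ⟨fun h => by simpa using h.map (g := f.symm) fun _ => by simp,
      fun h => h.map fun _ => by simp⟩

theorem card_minimalPeriod_eq_congr [Fintype α] [DecidableEq α] [Fintype β] [DecidableEq β]
    (f : α ≃ β) (x : α) (j : ℕ) :
    #{σ : Perm α | minimalPeriod σ x = j} = #{τ : Perm β | minimalPeriod τ (f x) = j} :=
  card_equiv f.permCongr fun σ => by simp [minimalPeriod_permCongr]

theorem minimalPeriod_eq_card_support_cycleOf [Fintype α] [DecidableEq α] {σ : Perm α} {x : α}
    (hx : σ x ≠ x) : minimalPeriod σ x = #(σ.cycleOf x).support := by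
  have hdvd : ∀ k, minimalPeriod σ x ∣ k ↔ #(σ.cycleOf x).support ∣ k := fun k => by
    rw [← isPeriodicPt_iff_minimalPeriod_dvd, IsPeriodicPt, IsFixedPt, ← coe_pow,
      (σ.isCycleOn_support_cycleOf x).pow_apply_eq (mem_support_cycleOf_iff.2
        ⟨SameCycle.refl _ _, mem_support.2 hx⟩)]
  exact Nat.dvd_antisymm ((hdvd _).2 dvd_rfl) ((hdvd _).1 dvd_rfl)

section DecomposeFin

variable {n : ℕ} (q : Fin n) (e : Perm (Fin n))

theorem decomposeFin_symm_succ_apply_succ (x : Fin n) :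
    decomposeFin.symm (q.succ, e) x.succ = if e x = q then 0 else (e x).succ := by
  rw [decomposeFin_symm_apply_succ]
  split_ifs with h
  · simp [h]
  · exact swap_apply_of_ne_of_ne (Fin.succ_ne_zero _) (by simpa using h)

theorem iterate_decomposeFin_symm_succ_zero {k : ℕ} (hk : k < minimalPeriod e q) :
    (decomposeFin.symm (q.succ, e))^[k + 1] 0 = (e^[k] q).succ := by
  induction k with
  | zero => simp
  | succ k ih =>
    have hne : e (e^[k] q) ≠ q := by
      rw [← iterate_succ_apply' e]
      exact not_isPeriodicPt_of_pos_of_lt_minimalPeriod k.succ_ne_zero hk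
    rw [iterate_succ_apply', ih (by omega), decomposeFin_symm_succ_apply_succ, if_neg hne,
      iterate_succ_apply']

theorem minimalPeriod_decomposeFin_symm_succ :
    minimalPeriod (decomposeFin.symm (q.succ, e)) 0 = minimalPeriod e q + 1 := by
  set σ := decomposeFin.symm (q.succ, e)
  obtain ⟨L, hL⟩ : ∃ L, minimalPeriod e q = L + 1 :=
    Nat.exists_eq_add_one.2 (minimalPeriod_pos e q)
  have hper : IsPeriodicPt σ (L + 2) 0 := by
    have hret : e (e^[L] q) = q := by
      rw [← iterate_succ_apply' e, Nat.succ_eq_add_one, ← hL]; exact iterate_minimalPeriod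
    rw [IsPeriodicPt, IsFixedPt, iterate_succ_apply', iterate_decomposeFin_symm_succ_zero q e
      (by omega), decomposeFin_symm_succ_apply_succ, if_pos hret]
  rw [hL]
  refine le_antisymm (hper.minimalPeriod_le (by omega)) (not_lt.1 fun hlt => ?_)
  obtain ⟨k, hk⟩ := Nat.exists_eq_add_one.2 (minimalPeriod_pos σ 0)
  have hret : σ^[k + 1] 0 = 0 := hk ▸ iterate_minimalPeriod
  rw [iterate_decomposeFin_symm_succ_zero q e (by omega)] at hret
  exact Fin.succ_ne_zero _ hret

theorem minimalPeriod_decomposeFin_symm_zero :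
    minimalPeriod (decomposeFin.symm (0, e)) 0 = 1 :=
  minimalPeriod_eq_one_iff_isFixedPt.2 (decomposeFin_symm_apply_zero _ _)

end DecomposeFin

theorem card_filter_perm_fin_succ {n : ℕ} (P : Perm (Fin (n + 1)) → Prop) [DecidablePred P] :
    #{σ | P σ} = ∑ p, #{e : Perm (Fin n) | P (decomposeFin.symm (p, e))} := by
  simp only [card_filter]
  rw [← decomposeFin.symm.sum_comp, Fintype.sum_prod_type]

theorem card_minimalPeriod_zero_eq_factorial {n j : ℕ} (hj : j ≤ n) :
    #{σ : Perm (Fin (n + 1)) | minimalPeriod σ 0 = j + 1} = n ! := by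
  induction j generalizing n with
  | zero =>
    rw [card_filter_perm_fin_succ, Fin.sum_univ_succ]
    simp [minimalPeriod_decomposeFin_symm_zero, minimalPeriod_decomposeFin_symm_succ,
      (minimalPeriod_pos _ _).ne', Fintype.card_perm]
  | succ j ih =>
    obtain ⟨n, rfl⟩ : ∃ m, n = m + 1 := ⟨n - 1, by omega⟩
    have hq (q : Fin (n + 1)) :
        #{e : Perm (Fin (n + 1)) | minimalPeriod e q = j + 1} = n ! := by
      rw [card_minimalPeriod_eq_congr (swap q 0), swap_apply_left]
      exact ih (by omega)
    rw [card_filter_perm_fin_succ, Fin.sum_univ_succ]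
    simp [minimalPeriod_decomposeFin_symm_zero, minimalPeriod_decomposeFin_symm_succ, hq,
      Nat.factorial_succ]

theorem card_minimalPeriod_eq_factorial [Fintype α] [DecidableEq α] (x : α) {j : ℕ}
    (hj : 0 < j) (hjα : j ≤ Fintype.card α) :
    #{σ : Perm α | minimalPeriod σ x = j} = (Fintype.card α - 1)! := by
  obtain ⟨n, hn⟩ := Nat.exists_eq_add_one.2 (Fintype.card_pos_iff.2 ⟨x⟩)
  obtain ⟨j, rfl⟩ := Nat.exists_eq_add_one.2 hj
  let f : α ≃ Fin (n + 1) :=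
    (Fintype.equivFinOfCardEq hn).trans (swap (Fintype.equivFinOfCardEq hn x) 0)
  have hfx : f x = 0 := by simp [f]
  rw [card_minimalPeriod_eq_congr f, hfx, card_minimalPeriod_zero_eq_factorial (by omega), hn,
    Nat.add_sub_cancel]

section CycleCounting

variable [Fintype α] [DecidableEq α]

theorem card_minimalPeriod_eq_one (σ : Perm α) :
    #{x | minimalPeriod σ x = 1} = σ.partition.parts.count 1 := by
  have hfix : ({x | minimalPeriod σ x = 1} : Finset α) = σ.supportᶜ := by
    ext x; simp [minimalPeriod_eq_one_iff_isFixedPt, IsFixedPt]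
  have hcount : σ.cycleType.count 1 = 0 :=
    Multiset.count_eq_zero.2 fun h => by have := two_le_of_mem_cycleType h; omega
  rw [hfix, card_compl]
  simp [parts_partition, hcount]

theorem filter_minimalPeriod_eq_biUnion (σ : Perm α) {j : ℕ} (hj : 2 ≤ j) :
    ({x | minimalPeriod σ x = j} : Finset α) =
      {c ∈ σ.cycleFactorsFinset | #c.support = j}.biUnion support := by
  ext x
  simp only [mem_filter, mem_univ, true_and, mem_biUnion]
  constructor
  · intro hx
    have hσx : σ x ≠ x := fun h => by
      rw [minimalPeriod_eq_one_iff_isFixedPt.2 h] at hx; omega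
    exact ⟨σ.cycleOf x, ⟨cycleOf_mem_cycleFactorsFinset_iff.2 (mem_support.2 hσx),
      minimalPeriod_eq_card_support_cycleOf hσx ▸ hx⟩,
      mem_support_cycleOf_iff.2 ⟨SameCycle.refl _ _, mem_support.2 hσx⟩⟩
  · rintro ⟨c, ⟨hc, rfl⟩, hxc⟩
    have hσx : σ x ≠ x := by
      rw [← (mem_cycleFactorsFinset_iff.1 hc).2 x hxc]; exact mem_support.1 hxc
    rw [minimalPeriod_eq_card_support_cycleOf hσx, cycle_is_cycleOf hxc hc]

theorem card_minimalPeriod_eq_mul_count (σ : Perm α) (j : ℕ) :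
    #{x | minimalPeriod σ x = j} = j * σ.partition.parts.count j := by
  rcases lt_trichotomy j 1 with h0 | rfl | h2
  · obtain rfl : j = 0 := by omega
    simp [(minimalPeriod_pos σ _).ne']
  · rw [card_minimalPeriod_eq_one, one_mul]
  · rw [filter_minimalPeriod_eq_biUnion σ h2, card_biUnion,
      sum_const_nat fun c hc => (mem_filter.1 hc).2, mul_comm]
    · rw [parts_partition, Multiset.count_add, Multiset.count_replicate, if_neg h2.ne, add_zero,
        cycleType_def, Multiset.count_map, card_def, filter_val]
      simp only [Function.comp_apply, eq_comm]
    · intro c hc d hd hcd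
      exact (σ.cycleFactorsFinset_pairwise_disjoint (mem_filter.1 hc).1 (mem_filter.1 hd).1
        hcd).disjoint_support

theorem mul_card_mem_parts_partition {j : ℕ} (hj : Fintype.card α < 2 * j)
    (hjα : j ≤ Fintype.card α) :
    j * #{σ : Perm α | j ∈ σ.partition.parts} = (Fintype.card α)! := by
  have hcount (σ : Perm α) : j * (if j ∈ σ.partition.parts then 1 else 0) =
      #{x | minimalPeriod σ x = j} := by
    rw [card_minimalPeriod_eq_mul_count]
    have := σ.partition.count_le_one_of_lt_two_mul hj
    split_ifs with h
    · rw [show σ.partition.parts.count j = 1 by have := Multiset.count_pos.2 h; omega]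
    · rw [Multiset.count_eq_zero.2 h]
  calc j * #{σ : Perm α | j ∈ σ.partition.parts}
      = ∑ σ : Perm α, #{x | minimalPeriod σ x = j} := by
        simp only [card_filter, mul_sum, hcount]
    _ = ∑ x : α, #{σ : Perm α | minimalPeriod σ x = j} := by
        simp only [card_filter]; exact sum_comm
    _ = Fintype.card α * (Fintype.card α - 1)! := by
        simp [card_minimalPeriod_eq_factorial _ (by omega : 0 < j) hjα]
    _ = (Fintype.card α)! := Nat.mul_factorial_pred (by omega)

theorem card_exists_long_cycle_div_factorial {K : Type*} [Field K] [CharZero K] :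
    (#{σ : Perm α | ∃ l ∈ σ.partition.parts, Fintype.card α < 2 * l} : K) /
        (Fintype.card α)! =
      ∑ j ∈ Ioc (Fintype.card α / 2) (Fintype.card α), (j : K)⁻¹ := by
  set N := Fintype.card α
  have hunion : ({σ : Perm α | ∃ l ∈ σ.partition.parts, N < 2 * l} : Finset (Perm α)) =
      (Ioc (N / 2) N).biUnion fun j => {σ | j ∈ σ.partition.parts} := by
    ext σ
    simp only [mem_filter, mem_univ, true_and, mem_biUnion, mem_Ioc]
    refine ⟨fun ⟨l, hl, hlN⟩ => ⟨l, ⟨by omega, σ.partition.le_of_mem_parts hl⟩, hl⟩,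
      fun ⟨l, ⟨hl, _⟩, hlσ⟩ => ⟨l, hlσ, by omega⟩⟩
  have hdisj : (Ioc (N / 2) N : Set ℕ).PairwiseDisjoint
      fun j => ({σ | j ∈ σ.partition.parts} : Finset (Perm α)) := by
    intro j hj k hk hjk
    simp only [coe_Ioc, Set.mem_Ioc] at hj hk
    refine disjoint_filter.2 fun σ _ hjσ hkσ => hjk ?_
    exact σ.partition.eq_of_mem_of_lt_two_mul hjσ hkσ (by omega) (by omega)
  rw [hunion, card_biUnion hdisj, Nat.cast_sum, sum_div]
  refine sum_congr rfl fun j hj => ?_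
  rw [mem_Ioc] at hj
  have hcount := mul_card_mem_parts_partition (α := α) (by omega : N < 2 * j) hj.2
  have hj0 : (j : K) ≠ 0 := by exact_mod_cast (show j ≠ 0 by omega)
  rw [div_eq_iff (Nat.cast_ne_zero.2 (factorial_ne_zero N)), ← hcount, Nat.cast_mul,
    inv_mul_cancel_left₀ hj0]

end CycleCounting

end Equiv.Perm

theorem fullCycleType_eq_parts_partition {n : ℕ} (σ : Equiv.Perm (Fin n)) :
    fullCycleType σ = σ.partition.parts := by
  simp [fullCycleType, Equiv.Perm.parts_partition]

theorem prob_long_cycle_eq_alternating_sum_general (n : ℕ) :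
    ((Finset.univ.filter fun σ : Equiv.Perm (Fin n) =>
        ∃ l ∈ fullCycleType σ, 2 * l > n).card : ℝ) / (Nat.factorial n : ℝ) =
      ∑ j ∈ Finset.Icc 1 n, (-1 : ℝ) ^ (j + 1) / j := by
  simpa [fullCycleType_eq_parts_partition, sum_alternating_inv_eq_sum_Ioc_inv] using
    Equiv.Perm.card_exists_long_cycle_div_factorial (α := Fin n) (K := ℝ)

theorem prob_long_cycle_eq_alternating_sum (n : ℕ) (hn : 1 ≤ n) :
    ((Finset.univ.filter fun σ : Equiv.Perm (Fin n) =>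
        ∃ l ∈ fullCycleType σ, 2 * l > n).card : ℝ) / (Nat.factorial n : ℝ) =
      ∑ j ∈ Finset.Icc 1 n, (-1 : ℝ) ^ (j + 1) / j :=
  prob_long_cycle_eq_alternating_sum_general n
end

section
/- Kelly's distribution sums to one: for every real θ > 0 and every integer n ≥ 1, Σ_{j=1}^n (θ/n)·C(n,j)/C(n+θ−1,j) = 1, where C(n,j) = n!/(j!(n−j)!) is the usual binomial coefficient and C(n+θ−1,j) denotes the generalized binomial coefficient (n+θ−1)(n+θ−2)⋯(n+θ−j)/j!. Equivalently, Σ_{j=1}^n (θ/n)·C(n,j)·j!/∏_{i=0}^{j−1}(n+θ−1−i) = 1. -/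
/-!
Write `x^{(j)} = x (x - 1) ⋯ (x - j + 1)` for the falling factorial, so that the `j`-th term is
`(θ / n) n^{(j)} / a^{(j)}` with `a = n + θ - 1`. Since `a + 1 - n = θ`, the terms telescope:
`(a + 1 - b) b^{(j)} / a^{(j)} = b^{(j)} / a^{(j-1)} - b^{(j+1)} / a^{(j)}`, and for `b = n` the
sum collapses to `n - n^{(n+1)} / a^{(n)} = n`.
-/

open Finset Polynomial

theorem sum_Icc_descPochhammer_div_descPochhammer {K : Type*} [Field K] (a b : K) (m : ℕ)
    (ha : (descPochhammer K m).eval a ≠ 0) :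
    ∑ j ∈ Icc 1 m, (a + 1 - b) * (descPochhammer K j).eval b / (descPochhammer K j).eval a =
      b - (descPochhammer K (m + 1)).eval b / (descPochhammer K m).eval a := by
  induction m with
  | zero => simp
  | succ m ih =>
    rw [descPochhammer_succ_eval] at ha
    have ha' : (descPochhammer K m).eval a ≠ 0 := left_ne_zero_of_mul ha
    have hsub : a - m ≠ 0 := right_ne_zero_of_mul ha
    rw [sum_Icc_succ_top (Nat.le_add_left 1 m), ih ha', descPochhammer_succ_eval (m + 1) b,
      descPochhammer_succ_eval m a]
    field_simp
    push_cast
    ring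

theorem sum_Icc_descFactorial_div_descPochhammer (θ : ℝ) (hθ : 0 < θ) (n : ℕ) :
    ∑ j ∈ Icc 1 n, θ * (n.descFactorial j : ℝ) / (descPochhammer ℝ j).eval ((n : ℝ) + θ - 1) =
      n := by
  have hpos : 0 < (descPochhammer ℝ n).eval ((n : ℝ) + θ - 1) := descPochhammer_pos (by linarith)
  have key := sum_Icc_descPochhammer_div_descPochhammer ((n : ℝ) + θ - 1) n n hpos.ne'
  simpa [descPochhammer_eval_eq_descFactorial] using key

theorem kelly_distribution_sums_to_one (θ : ℝ) (hθ : 0 < θ) (n : ℕ) (hn : 1 ≤ n) :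
    ∑ j ∈ Finset.Icc 1 n,
        (θ / n) * (Nat.choose n j : ℝ) * (Nat.factorial j : ℝ) /
          (∏ i ∈ Finset.range j, ((n : ℝ) + θ - 1 - i)) = 1 := by
  have hn0 : (n : ℝ) ≠ 0 := by positivity
  calc _ = (∑ j ∈ Icc 1 n, θ * (n.descFactorial j : ℝ) /
              (descPochhammer ℝ j).eval ((n : ℝ) + θ - 1)) / n := by
        rw [sum_div]
        refine sum_congr rfl fun j _ => ?_
        rw [descPochhammer_eval_eq_prod_range, Nat.descFactorial_eq_factorial_mul_choose]
        push_cast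
        ring
    _ = 1 := by rw [sum_Icc_descFactorial_div_descPochhammer θ hθ n, div_self hn0]
end

section
/- Donnelly's distribution sums to one: for every real θ > 0 and every integer n ≥ 1, Σ_{j=0}^n (θ/(n+θ))·C(n,j)/C(n+θ−1,j) = 1, where C(n,j) is the usual binomial coefficient and C(n+θ−1,j) denotes the generalized binomial coefficient ∏_{i=0}^{j−1}(n+θ−1−i)/j! (with the j = 0 term equal to θ/(n+θ)). In particular the j = 0 term shows that the probability that the oldest allele in the population is unobserved in the sample is θ/(n+θ), complementing the probability n/(n+θ) that it is observed. -/
/-!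
With `x = n + θ - 1` and falling factorials `(y)_j = y (y - 1) ⋯ (y - j + 1)`, the terms are
`θ / (n + θ) · (n)_j / (x)_j`. The sum `∑ (n)_j / (x)_j` telescopes against
`g j = (n)_j (x + 1 - j) / (x)_j`: one has `g j - g (j + 1) = (x + 1 - n) (n)_j / (x)_j`,
with `g 0 = x + 1 = n + θ` and `g (n + 1) = 0` because `(n)_{n+1} = 0`.
-/

open Finset Polynomial

section FallingFactorial

variable {K : Type*} [Field K]

theorem descPochhammer_eval_ne_zero {x : K} {m : ℕ} (hx : ∀ i < m, x ≠ i) :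
    (descPochhammer K m).eval x ≠ 0 := by
  rw [descPochhammer_eval_eq_prod_range]
  exact prod_ne_zero_iff.2 fun i hi => sub_ne_zero.2 (hx i (mem_range.1 hi))

theorem mul_sum_descPochhammer_div_descPochhammer (n : ℕ) {x : K} (hx : ∀ i < n, x ≠ i) :
    (x + 1 - n) * ∑ j ∈ range (n + 1),
        (descPochhammer K j).eval (n : K) / (descPochhammer K j).eval x = x + 1 := by
  set g : ℕ → K := fun j =>
    (descPochhammer K j).eval (n : K) * (x + 1 - j) / (descPochhammer K j).eval x
  have telescope : ∀ j ∈ range (n + 1), (x + 1 - n) *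
      ((descPochhammer K j).eval (n : K) / (descPochhammer K j).eval x) = g j - g (j + 1) := by
    intro j hj
    have hPx := descPochhammer_eval_ne_zero fun i hi => hx i (hi.trans_le (mem_range_succ_iff.1 hj))
    simp only [g, descPochhammer_succ_eval, Nat.cast_succ]
    rcases (mem_range_succ_iff.1 hj).lt_or_eq with hjn | rfl
    · have hxj : x - j ≠ 0 := sub_ne_zero.2 (hx j hjn)
      field_simp
      ring
    · simp only [sub_self, mul_zero, zero_mul, zero_div, sub_zero]
      ring
  have g_zero : g 0 = x + 1 := by simp [g]
  have g_succ : g (n + 1) = 0 := by simp [g, descPochhammer_succ_eval]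
  rw [mul_sum, sum_congr rfl telescope, sum_range_sub', g_zero, g_succ, sub_zero]

end FallingFactorial

theorem donnelly_distribution_sums_to_one_general (θ : ℝ) (hθ : 0 < θ) (n : ℕ) :
    ∑ j ∈ Finset.range (n + 1),
        (θ / (n + θ)) * (Nat.choose n j : ℝ) * (Nat.factorial j : ℝ) /
          (∏ i ∈ Finset.range j, ((n : ℝ) + θ - 1 - i)) = 1 := by
  have hx : ∀ i < n, (n : ℝ) + θ - 1 ≠ i := fun i hi => by
    have : (i : ℝ) + 1 ≤ n := by exact_mod_cast hi
    linarith
  have hsum := mul_sum_descPochhammer_div_descPochhammer n hx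
  have hterm : ∀ j ∈ range (n + 1),
      θ / (n + θ) * (n.choose j : ℝ) * (j.factorial : ℝ) / ∏ i ∈ range j, ((n : ℝ) + θ - 1 - i) =
        θ / (n + θ) * ((descPochhammer ℝ j).eval (n : ℝ) /
          (descPochhammer ℝ j).eval ((n : ℝ) + θ - 1)) := by
    intro j _
    rw [descPochhammer_eval_eq_descFactorial, Nat.descFactorial_eq_factorial_mul_choose,
      descPochhammer_eval_eq_prod_range]
    push_cast
    ring
  rw [sum_congr rfl hterm, ← mul_sum]
  have hnθ : (n : ℝ) + θ ≠ 0 := by positivity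
  field_simp
  linear_combination hsum

theorem donnelly_distribution_sums_to_one (θ : ℝ) (hθ : 0 < θ) (n : ℕ) (hn : 1 ≤ n) :
    ∑ j ∈ Finset.range (n + 1),
        (θ / (n + θ)) * (Nat.choose n j : ℝ) * (Nat.factorial j : ℝ) /
          (∏ i ∈ Finset.range j, ((n : ℝ) + θ - 1 - i)) = 1 :=
  donnelly_distribution_sums_to_one_general θ hθ n
end

section
/- The Donnelly–Tavaré age-ordered sampling formula is the size-biased version of the Ewens sampling formula: for every integer n ≥ 1, every real θ > 0, and every vector (a_1,…,a_n) of non-negative integers with Σ_{i=1}^n i·a_i = n and Σ_{i=1}^n a_i = k, summing the quantity θ^k·(n−1)! / (S_n(θ)·n_k·(n_k+n_{k−1})·(n_k+n_{k−1}+n_{k−2})⋯(n_k+n_{k−1}+⋯+n_2)) over all ordered sequences (n_1, n_2, …, n_k) of positive integers such that for each i the number of indices j with n_j = i equals a_i, yields ESF_{n,θ}(a). -/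
open Finset

/-
Write `z_s = ∏_v v ^ c_v * c_v!` for the multiset `s` of allele counts, `c_v` being the
multiplicity of `v`, so that `ESF = n! θ^k / (z_s S_n(θ))`. The claim is then that the age-ordered
weights `∏_{m=1}^{k} (n_m + ⋯ + n_k)⁻¹` of all orderings of `s` add up to `1 / z_s` (the factor
for `m = 1` is `1 / n`, which turns `(n-1)!` into `n!`). This goes by induction on `k`,
conditioning on the oldest allele: an ordering starting with `v` has weight `(sum s)⁻¹` times the
weight of an ordering of `s - {v}`, and since `z_s = v c_v z_{s - {v}}`, the induction hypothesis
gives `∑_v (sum s)⁻¹ v c_v / z_s = 1 / z_s`.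
-/

section Listings

variable {α : Type*}

theorem count_univ_val_map {ι : Type*} [Fintype ι] [DecidableEq α] (f : ι → α) (v : α) :
    (univ.val.map f).count v = #{j | f j = v} := by
  rw [Multiset.count_map, card_def, filter_val]
  simp [eq_comm]

theorem univ_val_map_cons {k : ℕ} (v : α) (g : Fin k → α) :
    univ.val.map (Fin.cons v g : Fin (k + 1) → α) = v ::ₘ univ.val.map g := by
  simp [List.ofFn_succ]

variable [DecidableEq α]

def listings (k : ℕ) (s : Multiset α) : Finset (Fin k → α) :=
  {f ∈ Fintype.piFinset fun _ => s.toFinset | univ.val.map f = s}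

theorem mem_listings {k : ℕ} {s : Multiset α} {f : Fin k → α} :
    f ∈ listings k s ↔ univ.val.map f = s := by
  simp only [listings, mem_filter, Fintype.mem_piFinset, and_iff_right_iff_imp]
  rintro rfl j
  exact Multiset.mem_toFinset.mpr (Multiset.mem_map_of_mem f (mem_univ_val j))

theorem cons_mem_listings_iff {k : ℕ} {s : Multiset α} {v : α} {g : Fin k → α} :
    (Fin.cons v g : Fin (k + 1) → α) ∈ listings (k + 1) s ↔
      v ∈ s ∧ g ∈ listings k (s.erase v) := by
  simp only [mem_listings, univ_val_map_cons]
  constructor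
  · rintro rfl
    exact ⟨Multiset.mem_cons_self _ _, (Multiset.erase_cons_head _ _).symm⟩
  · rintro ⟨hv, hg⟩
    rw [hg, Multiset.cons_erase hv]

theorem sum_listings_succ {β : Type*} [AddCommMonoid β] {k : ℕ} (s : Multiset α)
    (F : (Fin (k + 1) → α) → β) :
    ∑ f ∈ listings (k + 1) s, F f =
      ∑ v ∈ s.toFinset, ∑ g ∈ listings k (s.erase v), F (Fin.cons v g) := by
  rw [sum_sigma']
  refine (sum_nbij' (fun p : Σ _ : α, Fin k → α => (Fin.cons p.1 p.2 : Fin (k + 1) → α))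
    (fun f => ⟨f 0, Fin.tail f⟩)
    ?_ ?_ (fun _ _ => by simp) (fun f _ => Fin.cons_self_tail f) (fun _ _ => rfl)).symm
  · rintro ⟨v, g⟩ h
    simpa [cons_mem_listings_iff] using h
  · intro f hf
    rw [← Fin.cons_self_tail f, cons_mem_listings_iff] at hf
    simpa using hf

theorem mem_of_mem_listings {k : ℕ} {s : Multiset α} {f : Fin k → α}
    (hf : f ∈ listings k s) (j : Fin k) : f j ∈ s :=
  mem_listings.mp hf ▸ Multiset.mem_map_of_mem f (mem_univ_val j)

theorem sum_eq_of_mem_listings [AddCommMonoid α] {k : ℕ} {s : Multiset α} {f : Fin k → α}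
    (hf : f ∈ listings k s) : ∑ j, f j = s.sum := by
  rw [← mem_listings.mp hf]
  rfl

end Listings

section TailSum

variable {M : Type*} [AddCommMonoid M]

-- `f m + ⋯ + f (k - 1)`, indexed by `ℕ` as in the sampling formula (so `0` for `m ≥ k`).
def tailSum {k : ℕ} (f : Fin k → M) (m : ℕ) : M :=
  ∑ t ∈ Ico m k, if h : t < k then f ⟨t, h⟩ else 0

theorem tailSum_zero {k : ℕ} (f : Fin k → M) : tailSum f 0 = ∑ j, f j := by
  rw [tailSum, ← range_eq_Ico,
    ← Fin.sum_univ_eq_sum_range (fun t => if h : t < k then f ⟨t, h⟩ else 0)]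
  simp

theorem tailSum_cons_succ {k : ℕ} (v : M) (g : Fin k → M) (m : ℕ) :
    tailSum (Fin.cons v g : Fin (k + 1) → M) (m + 1) = tailSum g m := by
  rw [tailSum, tailSum, ← sum_Ico_add']
  refine sum_congr rfl fun t _ => ?_
  by_cases h : t < k
  · simpa [h] using Fin.cons_succ (α := fun _ => M) v g ⟨t, h⟩
  · simp [h]

end TailSum

open scoped Nat

noncomputable def ageWeight {k : ℕ} (f : Fin k → ℕ) : ℝ :=
  ∏ m ∈ range k, ((tailSum f m : ℕ) : ℝ)⁻¹

theorem ageWeight_cons {k : ℕ} (v : ℕ) (g : Fin k → ℕ) :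
    ageWeight (Fin.cons v g : Fin (k + 1) → ℕ) =
      ((v + ∑ j, g j : ℕ) : ℝ)⁻¹ * ageWeight g := by
  rw [ageWeight, prod_range_succ', mul_comm, tailSum_zero, Fin.sum_cons]
  simp only [tailSum_cons_succ, ageWeight]

-- `z_λ`, the order of the centralizer of a permutation of cycle type `λ`.
def centralizerSize (s : Multiset ℕ) : ℕ :=
  ∏ v ∈ s.toFinset, v ^ s.count v * (s.count v)!

theorem centralizerSize_eq_prod_of_subset {s : Multiset ℕ} {T : Finset ℕ}
    (h : s.toFinset ⊆ T) :
    centralizerSize s = ∏ v ∈ T, v ^ s.count v * (s.count v)! :=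
  prod_subset h fun v _ hv => by
    rw [Multiset.count_eq_zero.mpr (by simpa using hv), pow_zero, Nat.factorial_zero, mul_one]

theorem centralizerSize_cons (v : ℕ) (t : Multiset ℕ) :
    centralizerSize (v ::ₘ t) = v * (t.count v + 1) * centralizerSize t := by
  have hv : v ∈ (v ::ₘ t).toFinset := by simp
  rw [centralizerSize, centralizerSize_eq_prod_of_subset (by simp [subset_insert] :
      t.toFinset ⊆ (v ::ₘ t).toFinset), ← mul_prod_erase _ _ hv, ← mul_prod_erase _ _ hv,
    prod_congr rfl fun w hw => by rw [Multiset.count_cons_of_ne (ne_of_mem_erase hw)],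
    Multiset.count_cons_self, Nat.factorial_succ, pow_succ]
  ring

theorem centralizerSize_eq_mul_erase {s : Multiset ℕ} {v : ℕ} (hv : v ∈ s) :
    centralizerSize s = v * s.count v * centralizerSize (s.erase v) := by
  conv_lhs => rw [← Multiset.cons_erase hv]
  rw [centralizerSize_cons, ← Multiset.count_cons_self, Multiset.cons_erase hv]

theorem inv_centralizerSize_erase {s : Multiset ℕ} {v : ℕ} (hv : v ∈ s) (hv0 : v ≠ 0) :
    ((centralizerSize (s.erase v) : ℕ) : ℝ)⁻¹ =
      v * s.count v * ((centralizerSize s : ℕ) : ℝ)⁻¹ := by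
  have hcount0 : (s.count v : ℝ) ≠ 0 := Nat.cast_ne_zero.mpr (Multiset.count_ne_zero.mpr hv)
  have hv0' : (v : ℝ) ≠ 0 := Nat.cast_ne_zero.mpr hv0
  rw [centralizerSize_eq_mul_erase hv, Nat.cast_mul, Nat.cast_mul]
  field_simp

theorem sum_ageWeight_listings (s : Multiset ℕ) (hs : ∀ v ∈ s, 0 < v) :
    ∑ f ∈ listings (Multiset.card s) s, ageWeight f =
      ((centralizerSize s : ℕ) : ℝ)⁻¹ := by
  generalize hk : Multiset.card s = k
  induction k generalizing s with
  | zero =>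
    obtain rfl := Multiset.card_eq_zero.mp hk
    simp [listings, ageWeight, centralizerSize]
  | succ k ih =>
    have hs_sum : (s.sum : ℝ) ≠ 0 := by
      obtain ⟨v, hv⟩ := Multiset.card_pos_iff_exists_mem.mp (by rw [hk]; exact k.succ_pos)
      exact Nat.cast_ne_zero.mpr ((hs v hv).trans_le (Multiset.le_sum_of_mem hv)).ne'
    have sum_count : ∑ v ∈ s.toFinset, (v * s.count v : ℝ) = s.sum := by
      rw [Finset.sum_multiset_count s, Nat.cast_sum]
      exact sum_congr rfl fun v _ => by rw [smul_eq_mul, Nat.cast_mul, mul_comm]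
    have step : ∀ v ∈ s.toFinset,
        ∑ g ∈ listings k (s.erase v), ageWeight (Fin.cons v g : Fin (k + 1) → ℕ) =
          (s.sum : ℝ)⁻¹ * ((v * s.count v : ℝ) * (centralizerSize s : ℝ)⁻¹) := by
      intro v hv
      rw [Multiset.mem_toFinset] at hv
      have hcard : Multiset.card (s.erase v) = k := by
        rw [Multiset.card_erase_of_mem hv, hk, Nat.pred_succ]
      calc ∑ g ∈ listings k (s.erase v), ageWeight (Fin.cons v g : Fin (k + 1) → ℕ)
          = ∑ g ∈ listings k (s.erase v), (s.sum : ℝ)⁻¹ * ageWeight g :=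
            sum_congr rfl fun g hg => by
              rw [ageWeight_cons, sum_eq_of_mem_listings hg, Multiset.sum_erase hv]
        _ = _ := by
            rw [← mul_sum, ih _ (fun w hw => hs w (Multiset.mem_of_mem_erase hw)) hcard,
              inv_centralizerSize_erase hv (hs v hv).ne']
    rw [sum_listings_succ, sum_congr rfl step, ← mul_sum, ← sum_mul, sum_count,
      ← mul_assoc, inv_mul_cancel₀ hs_sum, one_mul]

theorem factorial_pred_div_prod_tailSum {k : ℕ} {f : Fin k → ℕ} (hf : ∀ j, 0 < f j) :
    (((∑ j, f j) - 1)! : ℝ) / ∏ m ∈ Ico 1 k, ((tailSum f m : ℕ) : ℝ) =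
      (∑ j, f j)! * ageWeight f := by
  cases k with
  | zero => simp [ageWeight]
  | succ k =>
    have hN : 0 < ∑ j, f j :=
      (hf 0).trans_le (single_le_sum (fun _ _ => Nat.zero_le _) (mem_univ 0))
    rw [ageWeight, prod_range_eq_mul_Ico _ k.succ_pos, tailSum_zero, prod_inv_distrib,
      ← Nat.mul_factorial_pred hN.ne', Nat.cast_mul]
    have : ((∑ j, f j : ℕ) : ℝ) ≠ 0 := Nat.cast_ne_zero.mpr hN.ne'
    field_simp

section PartitionVector

variable {n : ℕ} (a : Fin n → ℕ)

def multisetOfCounts : Multiset ℕ :=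
  ∑ i : Fin n, Multiset.replicate (a i) (i + 1)

theorem mem_Icc_of_mem_multisetOfCounts {v : ℕ} (hv : v ∈ multisetOfCounts a) :
    v ∈ Icc 1 n := by
  obtain ⟨i, -, hi⟩ := Multiset.mem_sum.mp hv
  rw [Multiset.eq_of_mem_replicate hi, mem_Icc]
  omega

theorem count_multisetOfCounts (i : Fin n) : (multisetOfCounts a).count ((i : ℕ) + 1) = a i := by
  rw [multisetOfCounts, Multiset.count_sum', sum_eq_single i]
  · simp
  · intro j _ hji
    rw [Multiset.count_replicate, if_neg fun h => hji (Fin.ext (by omega))]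
  · simp

theorem card_multisetOfCounts : Multiset.card (multisetOfCounts a) = ∑ i, a i := by
  simp [multisetOfCounts, Multiset.card_sum]

theorem sum_multisetOfCounts : (multisetOfCounts a).sum = ∑ i : Fin n, (i + 1) * a i := by
  simp [multisetOfCounts, Multiset.sum_sum, mul_comm]

theorem prod_fin_add_one_eq_prod_Icc {M : Type*} [CommMonoid M] (g : ℕ → M) :
    ∏ i : Fin n, g (i + 1) = ∏ v ∈ Icc 1 n, g v := by
  rw [Fin.prod_univ_eq_prod_range (fun i => g (i + 1)), range_eq_Ico, prod_Ico_add' g]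
  rfl

theorem centralizerSize_multisetOfCounts :
    centralizerSize (multisetOfCounts a) = ∏ i : Fin n, (i + 1) ^ a i * (a i)! := by
  rw [centralizerSize_eq_prod_of_subset fun v hv =>
      mem_Icc_of_mem_multisetOfCounts a (Multiset.mem_toFinset.mp hv),
    ← prod_fin_add_one_eq_prod_Icc]
  simp only [count_multisetOfCounts]

theorem filter_count_eq_listings (k : ℕ) :
    (Fintype.piFinset fun _ : Fin k => Icc 1 n).filter
        (fun f => (∀ j, 1 ≤ f j) ∧ ∀ i : Fin n, #{j | f j = (i : ℕ) + 1} = a i) =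
      listings k (multisetOfCounts a) := by
  ext f
  simp only [mem_filter, Fintype.mem_piFinset, mem_listings]
  constructor
  · rintro ⟨hrange, -, hcount⟩
    ext v
    rw [count_univ_val_map]
    by_cases hv : v ∈ Icc 1 n
    · obtain ⟨i, rfl⟩ : ∃ i : Fin n, (i : ℕ) + 1 = v :=
        ⟨⟨v - 1, by grind⟩, by grind⟩
      rw [hcount, count_multisetOfCounts]
    · rw [Multiset.count_eq_zero.mpr fun h => hv (mem_Icc_of_mem_multisetOfCounts a h),
        card_eq_zero, filter_eq_empty_iff]
      exact fun j _ h => hv (h ▸ hrange j)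
  · intro h
    have hmem (j : Fin k) : f j ∈ Icc 1 n :=
      mem_Icc_of_mem_multisetOfCounts a (h ▸ Multiset.mem_map_of_mem f (mem_univ_val j))
    refine ⟨hmem, fun j => (mem_Icc.mp (hmem j)).1, fun i => ?_⟩
    rw [← count_univ_val_map, h, count_multisetOfCounts]

end PartitionVector

theorem donnelly_tavare_age_ordered_sampling_general (n : ℕ) (θ : ℝ)
    (a : Fin n → ℕ) (ha : ∑ i : Fin n, (i.1 + 1) * a i = n)
    (k : ℕ) (hak : ∑ i, a i = k) :
    ∑ f ∈ (Fintype.piFinset fun _ : Fin k => Finset.Icc 1 n).filter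
        (fun f => (∀ j, 1 ≤ f j) ∧
          ∀ i : Fin n, (Finset.univ.filter fun j : Fin k => f j = i.1 + 1).card = a i),
      θ ^ k * (Nat.factorial (n - 1) : ℝ) /
        (risingFac θ n *
          ∏ m ∈ Finset.Ico 1 k,
            ((∑ t ∈ Finset.Ico m k, (fun t : ℕ => if h : t < k then f ⟨t, h⟩ else 0) t : ℕ) : ℝ)) =
      ESF n θ a := by
  set s := multisetOfCounts a
  have hs : ∀ v ∈ s, 0 < v := fun v hv => (mem_Icc.mp (mem_Icc_of_mem_multisetOfCounts a hv)).1
  have hsum : s.sum = n := by rw [sum_multisetOfCounts, ha]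
  have hweights : ∑ f ∈ listings k s, ageWeight f = ((centralizerSize s : ℕ) : ℝ)⁻¹ := by
    rw [← sum_ageWeight_listings s hs, card_multisetOfCounts, hak]
  rw [filter_count_eq_listings]
  calc _ = ∑ f ∈ listings k s, θ ^ k / risingFac θ n * (n ! * ageWeight f) :=
        sum_congr rfl fun f hf => by
          have h := factorial_pred_div_prod_tailSum fun j => hs _ (mem_of_mem_listings hf j)
          rw [sum_eq_of_mem_listings hf, hsum] at h
          rw [← h]
          unfold tailSum
          ring
    _ = ESF n θ a := by
      rw [← mul_sum, ← mul_sum, hweights, ESF, hak, centralizerSize_multisetOfCounts]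
      push_cast
      ring

theorem donnelly_tavare_age_ordered_sampling (n : ℕ) (hn : 1 ≤ n) (θ : ℝ) (hθ : 0 < θ)
    (a : Fin n → ℕ) (ha : ∑ i : Fin n, (i.1 + 1) * a i = n)
    (k : ℕ) (hak : ∑ i, a i = k) :
    ∑ f ∈ (Fintype.piFinset fun _ : Fin k => Finset.Icc 1 n).filter
        (fun f => (∀ j, 1 ≤ f j) ∧
          ∀ i : Fin n, (Finset.univ.filter fun j : Fin k => f j = i.1 + 1).card = a i),
      θ ^ k * (Nat.factorial (n - 1) : ℝ) /
        (risingFac θ n *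
          ∏ m ∈ Finset.Ico 1 k,
            ((∑ t ∈ Finset.Ico m k, (fun t : ℕ => if h : t < k then f ⟨t, h⟩ else 0) t : ℕ) : ℝ)) =
      ESF n θ a :=
  donnelly_tavare_age_ordered_sampling_general n θ a ha k hak
end
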